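/- Let f ∈ ℂ⟦x,y⟧ with jet₃(f) = x³. Then dim_ℂ(ℂ⟦x,y⟧ / (⟨∂f/∂x, ∂f/∂y⟩ + ⟨x,y⟩³)) = 5, i.e. the equimultiplicity ideal ⟨x², x·y², y³⟩ has colength 5 with monomial basis {1, x, y, xy, y²} of the quotient. -/

import Mathlib

/- STATEMENT 5: Let f ∈ ℂ⟦x,y⟧ with jet₃(f) = x³ (i.e. f − x³ ∈ ⟨x,y⟩⁴).
Then the equimultiplicity ideal ⟨∂f/∂x, ∂f/∂y⟩ + ⟨x,y⟩³ equals ⟨x², xy², y³⟩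
and dim_ℂ(R/(⟨f_x,f_y⟩+m³)) = 5; i.e. ⟨x², xy², y³⟩ has colength 5. -/

noncomputable section

abbrev R2 : Type := MvPowerSeries (Fin 2) ℂ

noncomputable def Xv : R2 := MvPowerSeries.X 0
noncomputable def Yv : R2 := MvPowerSeries.X 1

noncomputable def mR2 : Ideal R2 := Ideal.span {Xv, Yv}

/-- formal partial derivative of a power series in two variables -/
noncomputable def pd (i : Fin 2) (f : R2) : R2 :=
  fun m => ((m i : ℂ) + 1) * MvPowerSeries.coeff (m + Finsupp.single i 1) f

/-! Write f = x³ + g with g ∈ m⁴. A derivation maps m⁴ into m³, so ∂f/∂x ≡ 3x² and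
∂f/∂y ≡ 0 modulo m³, and the ideal is ⟨x²⟩ + m³ = ⟨x², xy², y³⟩. A power series lies in the
ideal generated by finitely many monomials iff its coefficients vanish at every exponent
dominating none of them; hence taking coefficients identifies the quotient with the functions
on the staircase {1, x, y, xy, y²}. -/

theorem Derivation.mem_pow_of_mem_pow_succ {R A : Type*} [CommSemiring R] [CommSemiring A]
    [Algebra R A] (D : Derivation R A A) {I : Ideal A} {n : ℕ} {x : A}
    (hx : x ∈ I ^ (n + 1)) : D x ∈ I ^ n := by
  induction n generalizing x with
  | zero => simp
  | succ n ih =>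
    rw [pow_succ] at hx
    refine Submodule.mul_induction_on hx (fun a ha b hb => ?_) (fun x y hx hy => ?_)
    · rw [D.leibniz, smul_eq_mul, smul_eq_mul]
      exact add_mem (Ideal.mul_mem_right _ _ ha) (pow_succ' I n ▸ Ideal.mul_mem_mul hb (ih ha))
    · rw [map_add]
      exact add_mem hx hy

namespace MvPowerSeries

variable {σ R : Type*}

theorem le_order_of_mem_pow [CommSemiring R] {I : Ideal (MvPowerSeries σ R)}
    (hI : ∀ f ∈ I, 1 ≤ f.order) {n : ℕ} {f : MvPowerSeries σ R} (hf : f ∈ I ^ n) :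
    n ≤ f.order := by
  induction n generalizing f with
  | zero => simp
  | succ n ih =>
    rw [pow_succ'] at hf
    refine Submodule.mul_induction_on hf (fun a ha b hb => ?_) (fun x y hx hy => ?_)
    · calc ((n + 1 : ℕ) : ℕ∞) = 1 + n := by push_cast; ring
        _ ≤ a.order + b.order := add_le_add (hI a ha) (ih hb)
        _ ≤ (a * b).order := le_order_mul
    · exact (le_min hx hy).trans min_order_le_add

variable [CommRing R]

theorem exists_coeff_sub_monomial_mul (d : σ →₀ ℕ) (f : MvPowerSeries σ R) :
    ∃ q : MvPowerSeries σ R, ∀ m,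
      coeff m (f - monomial d 1 * q) = if d ≤ m then 0 else coeff m f := by
  classical
  let q : MvPowerSeries σ R := fun n => coeff (n + d) f
  refine ⟨q, fun m => ?_⟩
  rw [map_sub, coeff_monomial_mul]
  split_ifs with h
  · rw [one_mul, show coeff (m - d) q = coeff (m - d + d) f from rfl,
      tsub_add_cancel_of_le h, sub_self]
  · rw [sub_zero]

theorem mem_span_monomial_iff (S : Finset (σ →₀ ℕ)) {f : MvPowerSeries σ R} :
    f ∈ Ideal.span ((fun d => monomial d (1 : R)) '' S) ↔
      ∀ m, (∀ d ∈ S, ¬ d ≤ m) → coeff m f = 0 := by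
  classical
  constructor
  · intro hf
    induction hf using Submodule.span_induction with
    | mem x hx =>
      obtain ⟨d, hd, rfl⟩ := hx
      intro m hm
      exact coeff_monomial_ne (fun h => hm d hd h.ge) 1
    | zero => simp
    | add x y _ _ hx hy => intro m hm; rw [map_add, hx m hm, hy m hm, add_zero]
    | smul a x _ hx =>
      intro m hm
      rw [smul_eq_mul, coeff_mul]
      refine Finset.sum_eq_zero fun p hp => ?_
      have hle : p.2 ≤ m := (Finset.HasAntidiagonal.mem_antidiagonal.mp hp) ▸ le_add_self
      rw [hx p.2 (fun d hd h => hm d hd (h.trans hle)), mul_zero]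
  · induction S using Finset.induction_on generalizing f with
    | empty =>
      intro hf
      rw [ext (fun m => (hf m (by simp)).trans (coeff_zero m).symm)]
      exact zero_mem _
    | insert d S _ ih =>
      intro hf
      obtain ⟨q, hq⟩ := exists_coeff_sub_monomial_mul d f
      have hrest : f - monomial d 1 * q ∈ Ideal.span ((fun d => monomial d (1 : R)) '' S) := by
        refine ih fun m hm => ?_
        rw [hq]
        split_ifs with h
        · rfl
        · exact hf m (by simpa [h] using hm)
      rw [← sub_add_cancel f (monomial d 1 * q)]
      refine add_mem (Ideal.span_mono ?_ hrest) (Ideal.mul_mem_right _ _ (Ideal.subset_span ?_))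
      · exact Set.image_mono (by simp)
      · exact ⟨d, by simp, rfl⟩

theorem finrank_quotient_span_monomial {K : Type*} [Field K] (S T : Finset (σ →₀ ℕ))
    (hT : ∀ m, m ∈ T ↔ ∀ d ∈ S, ¬ d ≤ m) :
    Module.finrank K (MvPowerSeries σ K ⧸ Ideal.span ((fun d => monomial d (1 : K)) '' S)) =
      T.card := by
  classical
  let φ : MvPowerSeries σ K →ₗ[K] (T → K) := LinearMap.pi fun m => coeff (m : σ →₀ ℕ)
  have hker : LinearMap.ker φ =
      (Ideal.span ((fun d => monomial d (1 : K)) '' S)).restrictScalars K := by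
    ext f
    rw [LinearMap.mem_ker, Submodule.restrictScalars_mem, mem_span_monomial_iff, funext_iff]
    exact ⟨fun h m hm => h ⟨m, (hT m).mpr hm⟩, fun h m => h m ((hT m).mp m.2)⟩
  have hφ : Function.Surjective φ := fun v =>
    ⟨fun m => if h : m ∈ T then v ⟨m, h⟩ else 0, funext fun m => dif_pos m.2⟩
  rw [← (Submodule.Quotient.restrictScalarsEquiv K _).finrank_eq, ← hker,
    (φ.quotKerEquivOfSurjective hφ).finrank_eq]
  simp

end MvPowerSeries

open MvPowerSeries

def expo (a b : ℕ) : Fin 2 →₀ ℕ := Finsupp.single 0 a + Finsupp.single 1 b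

@[simp] lemma expo_apply_zero (a b : ℕ) : expo a b 0 = a := by simp [expo]

@[simp] lemma expo_apply_one (a b : ℕ) : expo a b 1 = b := by simp [expo]

lemma eq_expo (m : Fin 2 →₀ ℕ) : m = expo (m 0) (m 1) := by
  ext i
  fin_cases i <;> simp

lemma expo_inj {a b c d : ℕ} : expo a b = expo c d ↔ a = c ∧ b = d := by
  refine ⟨fun h => ⟨?_, ?_⟩, fun ⟨rfl, rfl⟩ => rfl⟩
  · simpa using DFunLike.congr_fun h 0
  · simpa using DFunLike.congr_fun h 1

lemma expo_le_iff {a b : ℕ} {m : Fin 2 →₀ ℕ} : expo a b ≤ m ↔ a ≤ m 0 ∧ b ≤ m 1 := by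
  simp [Finsupp.le_def, Fin.forall_fin_two]

lemma monomial_expo (a b : ℕ) : monomial (expo a b) (1 : ℂ) = Xv ^ a * Yv ^ b := by
  rw [Xv, Yv, X_pow_eq, X_pow_eq, monomial_mul_monomial, one_mul, expo]

def staircaseCorners : Finset (Fin 2 →₀ ℕ) := {expo 2 0, expo 1 2, expo 0 3}

def staircase : Finset (Fin 2 →₀ ℕ) := {expo 0 0, expo 1 0, expo 0 1, expo 1 1, expo 0 2}

lemma mem_staircase_iff (m : Fin 2 →₀ ℕ) :
    m ∈ staircase ↔ ∀ d ∈ staircaseCorners, ¬ d ≤ m := by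
  rw [eq_expo m]
  simp only [staircase, staircaseCorners, Finset.mem_insert, Finset.mem_singleton,
    forall_eq_or_imp, forall_eq, expo_inj, expo_le_iff, expo_apply_zero, expo_apply_one]
  omega

lemma card_staircase : staircase.card = 5 := by
  simp [staircase, expo_inj]

lemma degree_lt_three_of_mem_staircase {m : Fin 2 →₀ ℕ} (hm : m ∈ staircase) :
    m.degree < 3 := by
  simp only [staircase, Finset.mem_insert, Finset.mem_singleton] at hm
  rcases hm with rfl | rfl | rfl | rfl | rfl <;>
    simp [Finsupp.degree_eq_sum, Fin.sum_univ_two]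

lemma span_staircaseCorners :
    Ideal.span ((fun d => monomial d (1 : ℂ)) '' staircaseCorners) =
      (Ideal.span {Xv ^ 2, Xv * Yv ^ 2, Yv ^ 3} : Ideal R2) := by
  simp [staircaseCorners, Set.image_insert_eq, monomial_expo]

lemma finrank_quotient_span_staircaseCorners :
    Module.finrank ℂ (R2 ⧸ (Ideal.span {Xv ^ 2, Xv * Yv ^ 2, Yv ^ 3} : Ideal R2)) = 5 := by
  rw [← span_staircaseCorners, finrank_quotient_span_monomial _ staircase mem_staircase_iff,
    card_staircase]

lemma one_le_order_of_mem_mR2 {f : R2} (hf : f ∈ mR2) : 1 ≤ f.order := by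
  obtain ⟨a, b, rfl⟩ := Ideal.mem_span_pair.mp hf
  rw [one_le_order_iff_constCoeff_eq_zero]
  simp [Xv, Yv]

lemma mR2_pow_three_le : mR2 ^ 3 ≤ Ideal.span {Xv ^ 2, Xv * Yv ^ 2, Yv ^ 3} := by
  intro f hf
  rw [← span_staircaseCorners, mem_span_monomial_iff]
  intro m hm
  apply coeff_of_lt_order
  refine lt_of_lt_of_le ?_ (le_order_of_mem_pow (fun _ => one_le_order_of_mem_mR2) hf)
  exact_mod_cast degree_lt_three_of_mem_staircase ((mem_staircase_iff m).mpr hm)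

lemma pd_eq_pderiv (i : Fin 2) (f : R2) : pd i f = pderiv ℂ i f := by
  ext m
  rw [coeff_pderiv, mul_comm]
  rfl

lemma pderiv_zero_Xv_pow_three : pderiv ℂ 0 (Xv ^ 3) = 3 * Xv ^ 2 := by
  rw [pderiv_pow, Xv, pderiv_X_self]
  norm_num

lemma pderiv_one_Xv_pow_three : pderiv ℂ 1 (Xv ^ 3) = 0 := by
  rw [pderiv_pow, Xv, pderiv_X_of_ne (by decide), mul_zero]

lemma pd_sub_mem_mR2_pow_three {f : R2} (hjet : f - Xv ^ 3 ∈ mR2 ^ 4) :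
    pd 0 f - 3 * Xv ^ 2 ∈ mR2 ^ 3 ∧ pd 1 f ∈ mR2 ^ 3 := by
  have h0 := (pderiv ℂ 0).mem_pow_of_mem_pow_succ hjet
  have h1 := (pderiv ℂ 1).mem_pow_of_mem_pow_succ hjet
  rw [map_sub, pderiv_zero_Xv_pow_three, ← pd_eq_pderiv] at h0
  rw [map_sub, pderiv_one_Xv_pow_three, sub_zero, ← pd_eq_pderiv] at h1
  exact ⟨h0, h1⟩

lemma span_pd_sup_mR2_pow_three {f : R2} (hjet : f - Xv ^ 3 ∈ mR2 ^ 4) :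
    Ideal.span {pd 0 f, pd 1 f} ⊔ mR2 ^ 3 = Ideal.span {Xv ^ 2, Xv * Yv ^ 2, Yv ^ 3} := by
  obtain ⟨h0, h1⟩ := pd_sub_mem_mR2_pow_three hjet
  have hm3 := mR2_pow_three_le
  have hX : Xv ∈ mR2 := Ideal.subset_span (by simp)
  have hY : Yv ∈ mR2 := Ideal.subset_span (by simp)
  apply le_antisymm
  · refine sup_le (Ideal.span_le.mpr ?_) hm3
    rintro g (rfl | rfl)
    · rw [← sub_add_cancel (pd 0 f) (3 * Xv ^ 2)]
      exact add_mem (hm3 h0) (Ideal.mul_mem_left _ _ (Ideal.subset_span (by simp)))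
    · exact hm3 h1
  · rw [Ideal.span_le]
    rintro g (rfl | rfl | rfl)
    · have h3X2 : 3 * Xv ^ 2 ∈ Ideal.span {pd 0 f, pd 1 f} ⊔ mR2 ^ 3 := by
        rw [← sub_sub_cancel (pd 0 f) (3 * Xv ^ 2)]
        exact sub_mem (Ideal.mem_sup_left (Ideal.subset_span (by simp)))
          (Ideal.mem_sup_right h0)
      rw [show Xv ^ 2 = C (3⁻¹ : ℂ) * (3 * Xv ^ 2) by
        rw [← mul_assoc, ← map_ofNat C 3, ← map_mul, inv_mul_cancel₀ three_ne_zero, map_one,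
          one_mul]]
      exact Ideal.mul_mem_left _ _ h3X2
    · exact Ideal.mem_sup_right (pow_succ' mR2 2 ▸ Ideal.mul_mem_mul hX (Ideal.pow_mem_pow hY 2))
    · exact Ideal.mem_sup_right (Ideal.pow_mem_pow hY 3)

theorem statement5 (f : R2)
    (hjet : f - Xv ^ 3 ∈ mR2 ^ 4) :
    Ideal.span {pd 0 f, pd 1 f} ⊔ mR2 ^ 3 =
      Ideal.span {Xv ^ 2, Xv * Yv ^ 2, Yv ^ 3} ∧
    Module.finrank ℂ (R2 ⧸ (Ideal.span {pd 0 f, pd 1 f} ⊔ mR2 ^ 3)) = 5 ∧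
    Module.finrank ℂ
      (R2 ⧸ (Ideal.span {Xv ^ 2, Xv * Yv ^ 2, Yv ^ 3} : Ideal R2)) = 5 := by
  have hJ := span_pd_sup_mR2_pow_three hjet
  exact ⟨hJ, hJ ▸ finrank_quotient_span_staircaseCorners, finrank_quotient_span_staircaseCorners⟩
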